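/- Uniqueness of the width representative on a cycle: let L ≥ 2 and let S be a nonempty subset of (ℤ/Lℤ). Suppose k is a positive integer with k ≤ L/2 and there exists a ∈ ℤ/Lℤ such that every s ∈ S satisfies s − a ∈ {0, 1, ..., k−1} (as residues mod L), and moreover both values 0 and k−1 are attained by s − a for some s ∈ S. Then such a is unique. -/
import Mathlib

/-- Uniqueness of the width representative on a cycle: if `k ≤ L/2`, `k > 0`, and `a` is such
that every `s ∈ S` has `s − a` with representative in `{0, …, k−1}`, where both `0` and `k−1`
are attained, then `a` is unique. -/
theorem width_representative_unique (L k : ℕ) (hL : 2 ≤ L)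
    (S : Finset (ZMod L)) (hS : S.Nonempty) (hk : 0 < k) (hkL : k ≤ L / 2)
    (a b : ZMod L)
    (ha1 : ∀ s ∈ S, (s - a).val < k)
    (ha2 : ∃ s ∈ S, (s - a).val = 0)
    (ha3 : ∃ s ∈ S, (s - a).val = k - 1)
    (hb1 : ∀ s ∈ S, (s - b).val < k)
    (hb2 : ∃ s ∈ S, (s - b).val = 0)
    (hb3 : ∃ s ∈ S, (s - b).val = k - 1) :
    a = b := by
  haveI : NeZero L := ⟨by omega⟩
  obtain ⟨s, hsS, hs⟩ := hb2
  have hsb : s = b := by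
    have h0 : s - b = 0 := by
      rwa [← ZMod.val_eq_zero]
    have := sub_eq_zero.mp h0
    exact this
  obtain ⟨t, htS, ht⟩ := ha2
  have hta : t = a := sub_eq_zero.mp (by rwa [← ZMod.val_eq_zero])
  subst hsb hta
  have h1 : (s - t).val < k := ha1 s hsS
  have h2 : (t - s).val < k := hb1 t htS
  by_contra hne
  have hba : s - t ≠ 0 := sub_ne_zero.mpr (Ne.symm hne)
  have hval : (t - s).val = L - (s - t).val := by
    rw [show t - s = -(s - t) by ring, ZMod.neg_val, if_neg hba]
  have hpos : 0 < (s - t).val := by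
    rcases Nat.eq_zero_or_pos (s - t).val with h | h
    · exact absurd ((ZMod.val_eq_zero _).mp h) hba
    · exact h
  omega
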